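/- For any DAG G, both the node of rank 1 and the node of rank 2 (with respect to the progeny order) belong to the 2-influential set of G. -/

import Mathlib

attribute [local instance] Classical.propDecidable

/-- The progeny of node `i`: all nodes with a directed path to `i`, including `i`. -/
noncomputable def progeny {n : ℕ} (E : Finset (Fin n × Fin n)) (i : Fin n) : Finset (Fin n) :=
  Finset.univ.filter (fun j => Relation.ReflTransGen (fun u v => (u, v) ∈ E) j i)

/-- The graph is acyclic. -/
def Acyclic {n : ℕ} (E : Finset (Fin n × Fin n)) : Prop :=
  ∀ i : Fin n, ¬ Relation.TransGen (fun u v => (u, v) ∈ E) i i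

/-- `Prec E i j` means `i ≻ j` : larger progeny, ties broken by larger index. -/
def Prec {n : ℕ} (E : Finset (Fin n × Fin n)) (i j : Fin n) : Prop :=
  (progeny E j).card < (progeny E i).card ∨
    ((progeny E j).card = (progeny E i).card ∧ j < i)

/-- Delete all out-edges of node `i`. -/
noncomputable def delOut {n : ℕ} (E : Finset (Fin n × Fin n)) (i : Fin n) :
    Finset (Fin n × Fin n) := E.filter (fun e => e.1 ≠ i)

/-- `i` is in the `k`-influential set: fewer than `k` nodes outrank `i`
after `i` deletes all her out-edges. -/
noncomputable def Influential {n : ℕ} (k : ℕ) (E : Finset (Fin n × Fin n)) (i : Fin n) : Prop :=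
  (Finset.univ.filter (fun j => Prec (delOut E i) j i)).card < k

/-!
In an acyclic graph a path into `i` uses no out-edge of `i`, so deleting those edges keeps the
progeny of `i` and can only shrink the progeny of every other node. Hence whoever outranks `i`
afterwards already outranked it before, and the top two nodes are outranked by at most one node.
-/

variable {n : ℕ}

lemma progeny_mono {E F : Finset (Fin n × Fin n)} (hEF : E ⊆ F) (j : Fin n) :
    progeny E j ⊆ progeny F j := by
  intro x hx
  simp only [progeny, Finset.mem_filter, Finset.mem_univ, true_and] at hx ⊢
  exact Relation.ReflTransGen.mono (fun _ _ h => hEF h) _ _ hx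

lemma progeny_delOut_self {E : Finset (Fin n × Fin n)} (hE : Acyclic E) (i : Fin n) :
    progeny (delOut E i) i = progeny E i := by
  refine (progeny_mono (Finset.filter_subset _ _) i).antisymm fun x hx => ?_
  simp only [progeny, Finset.mem_filter, Finset.mem_univ, true_and] at hx ⊢
  induction hx using Relation.ReflTransGen.head_induction_on with
  | refl => exact .refl
  | @head a b hab hbi ih =>
    refine .head ⟨hab, ?_⟩ ih
    rintro rfl
    exact hE a (.head' hab hbi)

lemma Prec.asymm {E : Finset (Fin n × Fin n)} {i j : Fin n} (h : Prec E i j) :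
    ¬ Prec E j i := by
  rcases h with h | ⟨h, h'⟩ <;> rintro (g | ⟨g, g'⟩) <;> omega

lemma Prec.of_delOut {E : Finset (Fin n × Fin n)} (hE : Acyclic E) {i j : Fin n}
    (h : Prec (delOut E i) j i) : Prec E j i := by
  have hj := Finset.card_le_card (progeny_mono (Finset.filter_subset (fun e => e.1 ≠ i) E) j)
  rw [Prec, progeny_delOut_self hE] at h
  rcases h with h | ⟨h, h'⟩
  · exact .inl (h.trans_le hj)
  · rcases hj.eq_or_lt with hj | hj
    · exact .inr ⟨h.trans hj, h'⟩
    · exact .inl (h.trans_lt hj)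

lemma influential_of_card_prec_lt {E : Finset (Fin n × Fin n)} (hE : Acyclic E) {k : ℕ}
    {i : Fin n} (h : (Finset.univ.filter fun j => Prec E j i).card < k) :
    Influential k E i :=
  (Finset.card_le_card (Finset.monotone_filter_right _ fun _ _ => Prec.of_delOut hE)).trans_lt h

theorem stmt9_general {n : ℕ} (E : Finset (Fin n × Fin n)) (hE : Acyclic E)
    (i1 i2 : Fin n)
    (hi1 : ∀ j : Fin n, j ≠ i1 → Prec E i1 j)
    (hi2 : ∀ j : Fin n, j ≠ i1 → j ≠ i2 → Prec E i2 j) :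
    Influential 2 E i1 ∧ Influential 2 E i2 := by
  have not_prec_self (i : Fin n) : ¬ Prec E i i := fun h => h.asymm h
  refine ⟨influential_of_card_prec_lt hE ?_, influential_of_card_prec_lt hE ?_⟩
  · have no_rival : Finset.univ.filter (fun j => Prec E j i1) = ∅ :=
      Finset.filter_eq_empty_iff.mpr fun j _ hj =>
        if hji : j = i1 then not_prec_self i1 (hji ▸ hj) else (hi1 j hji).asymm hj
    simp [no_rival]
  · have only_i1 : Finset.univ.filter (fun j => Prec E j i2) ⊆ {i1} := fun j hj => by
      simp only [Finset.mem_filter, Finset.mem_univ, true_and] at hj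
      by_contra hj1
      by_cases hji : j = i2
      · exact not_prec_self i2 (hji ▸ hj)
      · exact (hi2 j (Finset.mem_singleton.not.mp hj1) hji).asymm hj
    exact (Finset.card_le_card only_i1).trans_lt (by simp)

/-- the rank-1 and rank-2 nodes both belong to the 2-influential set. -/
theorem stmt9 {n : ℕ} (hn : 2 ≤ n) (E : Finset (Fin n × Fin n)) (hE : Acyclic E)
    (i1 i2 : Fin n) (h12 : i1 ≠ i2)
    (hi1 : ∀ j : Fin n, j ≠ i1 → Prec E i1 j)
    (hi2 : ∀ j : Fin n, j ≠ i1 → j ≠ i2 → Prec E i2 j) :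
    Influential 2 E i1 ∧ Influential 2 E i2 :=
  stmt9_general E hE i1 i2 hi1 hi2
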